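/- arXiv:2303.09496 — 5 statements merged into one kernel-verified Lean document; each statement's English description precedes it below -/
import Mathlib

section
/- Let f be a polynomial in x₀,…,xₙ over K, let v ∈ K^{n+1} with v ≠ 0, and let φ ∈ M_{n+1}(K) with f(φ·v) = 0 and φ·v ≠ 0. If all partial derivatives (∂s_v/∂a_{ij}) vanish at φ (i.e., the point condition P_q is singular at φ), then all partial derivatives ∂f/∂x_i vanish at φ·v (i.e., X = V(f) is singular at the point φ(q)). -/
/-!
Write `A = (a_{ij})` for the generic matrix, so that `s_v = f(A v)`. The chain rule gives
`∂s_v/∂a_{ij} = v_j · (∂f/∂x_i)(A v)`; evaluating at `A = φ` and choosing `j` with `v_j ≠ 0`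
shows that every `∂f/∂x_i` vanishes at `φ v`.
-/

open MvPolynomial

/-- The polynomial `s_v` in the matrix variables `a_{ij}` obtained from `f`
by substituting `x_i ↦ ∑_j a_{ij} v_j`. -/
noncomputable def pointConditionPoly {K : Type*} [CommRing K] {n : ℕ}
    (f : MvPolynomial (Fin (n + 1)) K) (v : Fin (n + 1) → K) :
    MvPolynomial (Fin (n + 1) × Fin (n + 1)) K :=
  aeval (fun i => ∑ j, C (v j) * X (i, j)) f

theorem pderiv_aeval {R σ τ : Type*} [CommRing R] [Fintype σ] (g : σ → MvPolynomial τ R)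
    (k : τ) (f : MvPolynomial σ R) :
    pderiv k (aeval g f) = ∑ i, aeval g (pderiv i f) * pderiv k (g i) := by
  classical
  induction f using MvPolynomial.induction_on with
  | C a => simp
  | add p q hp hq => simp only [map_add, hp, hq, add_mul, Finset.sum_add_distrib]
  | mul_X p s hp =>
    simp only [map_mul, aeval_X, pderiv_mul, hp, pderiv_X, map_add, add_mul,
      Finset.sum_add_distrib, Finset.sum_mul]
    congr 1
    · exact Finset.sum_congr rfl fun i _ => by ring
    · rw [Finset.sum_eq_single s]
      · simp
      · intro i _ hi
        simp [Ne.symm hi]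
      · simp

section GenericMulVec

variable {R σ ι : Type*} [CommRing R] [Fintype ι]

noncomputable def genericMulVec (v : ι → R) (i : σ) : MvPolynomial (σ × ι) R :=
  ∑ j, C (v j) * X (i, j)

theorem eval_genericMulVec (v : ι → R) (φ : Matrix σ ι R) (i : σ) :
    eval (fun p : σ × ι => φ p.1 p.2) (genericMulVec v i) = (φ.mulVec v) i := by
  simp [genericMulVec, Matrix.mulVec, dotProduct, mul_comm]

theorem eval_aeval_genericMulVec (v : ι → R) (φ : Matrix σ ι R) (f : MvPolynomial σ R) :
    eval (fun p : σ × ι => φ p.1 p.2) (aeval (genericMulVec v) f) = eval (φ.mulVec v) f := by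
  rw [aeval_def, algebraMap_eq, ← eval_assoc]
  exact congrArg (eval · f) (funext (eval_genericMulVec v φ))

theorem pderiv_genericMulVec [DecidableEq σ] (v : ι → R) (i k : σ) (j : ι) :
    pderiv (i, j) (genericMulVec v k) = if k = i then C (v j) else 0 := by
  classical
  simp only [genericMulVec, map_sum, pderiv_C_mul, pderiv_X, Pi.single_apply, Prod.ext_iff]
  split_ifs with h <;> simp [h]

theorem pderiv_aeval_genericMulVec [Fintype σ] (v : ι → R) (f : MvPolynomial σ R)
    (i : σ) (j : ι) :
    pderiv (i, j) (aeval (genericMulVec v) f) = aeval (genericMulVec v) (pderiv i f) * C (v j) := by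
  classical
  simp only [pderiv_aeval, pderiv_genericMulVec, mul_ite, mul_zero, Finset.sum_ite_eq',
    Finset.mem_univ, if_true]

end GenericMulVec

theorem pointConditionPoly_eq_aeval_genericMulVec {K : Type*} [CommRing K] {n : ℕ}
    (f : MvPolynomial (Fin (n + 1)) K) (v : Fin (n + 1) → K) :
    pointConditionPoly f v = aeval (genericMulVec v) f :=
  rfl

theorem pointCondition_singular_of_general {K : Type*} [Field K] {n : ℕ}
    (f : MvPolynomial (Fin (n + 1)) K) (v : Fin (n + 1) → K) (hv : v ≠ 0)
    (φ : Matrix (Fin (n + 1)) (Fin (n + 1)) K)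
    (hsing : ∀ i j, eval (fun p : Fin (n + 1) × Fin (n + 1) => φ p.1 p.2)
        (pderiv (i, j) (pointConditionPoly f v)) = 0) :
    ∀ i, eval (φ.mulVec v) (pderiv i f) = 0 := by
  intro i
  obtain ⟨j, hj⟩ := Function.ne_iff.mp hv
  have h := hsing i j
  rw [pointConditionPoly_eq_aeval_genericMulVec, pderiv_aeval_genericMulVec, eval_mul,
    eval_aeval_genericMulVec, eval_C] at h
  exact (mul_eq_zero.mp h).resolve_right hj

/-- If the point condition `P_q` is singular at `φ` and `q ∉ ℙker φ`, then
`X = V(f)` is singular at `φ(q)`. -/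
theorem pointCondition_singular_of {K : Type*} [Field K] [IsAlgClosed K]
    [CharZero K] {n : ℕ}
    (f : MvPolynomial (Fin (n + 1)) K) (v : Fin (n + 1) → K) (hv : v ≠ 0)
    (φ : Matrix (Fin (n + 1)) (Fin (n + 1)) K)
    (hf : eval (φ.mulVec v) f = 0)
    (hφv : φ.mulVec v ≠ 0)
    (hsing : ∀ i j, eval (fun p : Fin (n + 1) × Fin (n + 1) => φ p.1 p.2)
        (pderiv (i, j) (pointConditionPoly f v)) = 0) :
    ∀ i, eval (φ.mulVec v) (pderiv i f) = 0 :=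
  pointCondition_singular_of_general f v hv φ hsing
end

section
/- Let φ ∈ M₄(K) be nonzero. Then (φw)₀(φw)₃ = (φw)₁(φw)₂ for all w ∈ K⁴ (i.e., the image of φ lies in the cone over the quadric Q) if and only if there exists s ∈ K²\{0} such that φw ∈ A_s for all w ∈ K⁴, or there exists s ∈ K²\{0} such that φw ∈ B_s for all w ∈ K⁴. That is, the support of the base scheme of the rational map induced by Q is Z₁ ∪ Z₂. -/
/-!
Read `x ∈ K⁴` as the matrix `[[x₀, x₁], [x₂, x₃]]`: the cone `C` consists of the matrices of rank
at most one, `A_s` of those whose columns lie on the line `K s`, and `B_s` of those whose rows do.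
If the image `V` of `φ` is nonzero, it contains some `u = a ⊗ b` with `a, b ≠ 0`. For `v ∈ V`,
both `v` and `u + v` lie in `C`, so the polar form vanishes at `(u, v)`; this forces the columns
of `v` onto `K a` or its rows onto `K b`. Hence `V ⊆ A_a ∪ B_b`, and a subspace covered by two
subspaces lies in one of them.
-/

variable {K : Type*} [Field K]

/-- Membership in the a-line cone `A_s = {x : s₁x₀ = s₀x₂ ∧ s₁x₁ = s₀x₃}`. -/
def memA (s : Fin 2 → K) (x : Fin 4 → K) : Prop :=
  s 1 * x 0 = s 0 * x 2 ∧ s 1 * x 1 = s 0 * x 3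

/-- Membership in the b-line cone `B_s = {x : s₁x₀ = s₀x₁ ∧ s₁x₂ = s₀x₃}`. -/
def memB (s : Fin 2 → K) (x : Fin 4 → K) : Prop :=
  s 1 * x 0 = s 0 * x 1 ∧ s 1 * x 2 = s 0 * x 3

namespace Quadric

open Matrix

def quadric (x : Fin 4 → K) : K := x 0 * x 3 - x 1 * x 2

def segre (a b : Fin 2 → K) : Fin 4 → K := ![a 0 * b 0, a 0 * b 1, a 1 * b 0, a 1 * b 1]

def coneA (s : Fin 2 → K) : Submodule K (Fin 4 → K) where
  carrier := {x | memA s x}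
  add_mem' := by
    rintro x y ⟨hx₁, hx₂⟩ ⟨hy₁, hy₂⟩
    simp only [Set.mem_ofPred_eq, memA, Pi.add_apply]
    exact ⟨by linear_combination hx₁ + hy₁, by linear_combination hx₂ + hy₂⟩
  zero_mem' := by simp [memA]
  smul_mem' := by
    rintro c x ⟨hx₁, hx₂⟩
    simp only [Set.mem_ofPred_eq, memA, Pi.smul_apply, smul_eq_mul]
    exact ⟨by linear_combination c * hx₁, by linear_combination c * hx₂⟩

def coneB (s : Fin 2 → K) : Submodule K (Fin 4 → K) where
  carrier := {x | memB s x}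
  add_mem' := by
    rintro x y ⟨hx₁, hx₂⟩ ⟨hy₁, hy₂⟩
    simp only [Set.mem_ofPred_eq, memB, Pi.add_apply]
    exact ⟨by linear_combination hx₁ + hy₁, by linear_combination hx₂ + hy₂⟩
  zero_mem' := by simp [memB]
  smul_mem' := by
    rintro c x ⟨hx₁, hx₂⟩
    simp only [Set.mem_ofPred_eq, memB, Pi.smul_apply, smul_eq_mul]
    exact ⟨by linear_combination c * hx₁, by linear_combination c * hx₂⟩

theorem quadric_eq_zero_of_memA {s : Fin 2 → K} {x : Fin 4 → K} (hs : s ≠ 0) (h : memA s x) :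
    quadric x = 0 := by
  obtain ⟨h₁, h₂⟩ := h
  unfold quadric
  rcases Fin.exists_fin_two.1 (Function.ne_iff.1 hs) with h₀ | h₀
  · exact mul_left_cancel₀ h₀ (by linear_combination x 1 * h₁ - x 0 * h₂)
  · exact mul_left_cancel₀ h₀ (by linear_combination x 3 * h₁ - x 2 * h₂)

theorem quadric_eq_zero_of_memB {s : Fin 2 → K} {x : Fin 4 → K} (hs : s ≠ 0) (h : memB s x) :
    quadric x = 0 := by
  -- `memB s x` is `memA s` of the transposed matrix
  have := quadric_eq_zero_of_memA (x := ![x 0, x 2, x 1, x 3]) hs h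
  simpa [quadric, mul_comm (x 2)] using this

theorem exists_eq_segre_of_quadric_eq_zero {u : Fin 4 → K} (hu : quadric u = 0) :
    ∃ a b, u = segre a b := by
  unfold quadric at hu
  by_cases h₀ : u 0 = 0
  · by_cases h₁ : u 1 = 0
    · exact ⟨![0, 1], ![u 2, u 3], by ext i; fin_cases i <;> simp [segre, h₀, h₁]⟩
    · have h₂ : u 2 = 0 := by simpa [h₀, h₁] using hu
      exact ⟨![1, u 3 / u 1], ![0, u 1], by ext i; fin_cases i <;> simp [segre, h₀, h₂, h₁]⟩
  · refine ⟨![1, u 2 / u 0], ![u 0, u 1], ?_⟩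
    ext i; fin_cases i <;> simp [segre, h₀]
    field_simp
    linear_combination hu

theorem memA_or_memB_of_polar_segre_eq_zero {a b : Fin 2 → K} {v : Fin 4 → K}
    (hv : quadric v = 0) (hpolar : QuadraticMap.polar quadric (segre a b) v = 0) :
    memA a v ∨ memB b v := by
  have hlin : a 0 * b 0 * v 3 + a 1 * b 1 * v 0 - a 0 * b 1 * v 2 - a 1 * b 0 * v 1 = 0 := by
    simp [QuadraticMap.polar, quadric, segre] at hpolar
    linear_combination hpolar
  unfold quadric at hv
  -- the two vectors vanish exactly when `v ∈ A_a`, resp. `v ∈ B_b`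
  have hprod : vecMulVec ![a 1 * v 0 - a 0 * v 2, a 1 * v 1 - a 0 * v 3]
      ![b 1 * v 0 - b 0 * v 1, b 1 * v 2 - b 0 * v 3] = 0 := by
    ext i j
    fin_cases i <;> fin_cases j <;> simp [vecMulVec_apply, -mul_eq_zero]
    · linear_combination v 0 * hlin - a 0 * b 0 * hv
    · linear_combination v 2 * hlin - a 1 * b 0 * hv
    · linear_combination v 1 * hlin - a 0 * b 1 * hv
    · linear_combination v 3 * hlin - a 1 * b 1 * hv
  refine (vecMulVec_eq_zero.1 hprod).imp (fun h => ?_) (fun h => ?_)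
  · exact ⟨sub_eq_zero.1 (congrFun h 0), sub_eq_zero.1 (congrFun h 1)⟩
  · exact ⟨sub_eq_zero.1 (congrFun h 0), sub_eq_zero.1 (congrFun h 1)⟩

theorem exists_le_coneA_or_exists_le_coneB (V : Submodule K (Fin 4 → K))
    (hV : ∀ v ∈ V, quadric v = 0) :
    (∃ s ≠ 0, V ≤ coneA s) ∨ (∃ s ≠ 0, V ≤ coneB s) := by
  rcases eq_or_ne V ⊥ with rfl | hV₀
  · exact Or.inl ⟨![1, 0], by simp, bot_le⟩
  obtain ⟨u, hu, hu₀⟩ := Submodule.exists_mem_ne_zero_of_ne_bot hV₀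
  obtain ⟨a, b, rfl⟩ := exists_eq_segre_of_quadric_eq_zero (hV _ hu)
  have hunion : (V : Set (Fin 4 → K)) ⊆ coneA a ∪ coneB b := fun v hv =>
    memA_or_memB_of_polar_segre_eq_zero (hV v hv) <| by
      rw [QuadraticMap.polar, hV _ (V.add_mem hu hv), hV _ hu, hV v hv, sub_zero, sub_zero]
  refine (AddSubgroupClass.subset_union.1 hunion).imp (fun h => ⟨a, ?_, h⟩) (fun h => ⟨b, ?_, h⟩)
  · rintro rfl; exact hu₀ (by simp [segre])
  · rintro rfl; exact hu₀ (by simp [segre])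

end Quadric

open Quadric

theorem base_locus_eq_union_general (φ : Matrix (Fin 4) (Fin 4) K) :
    (∀ w : Fin 4 → K, φ.mulVec w 0 * φ.mulVec w 3 = φ.mulVec w 1 * φ.mulVec w 2) ↔
      (∃ s : Fin 2 → K, s ≠ 0 ∧ ∀ w : Fin 4 → K, memA s (φ.mulVec w)) ∨
      (∃ s : Fin 2 → K, s ≠ 0 ∧ ∀ w : Fin 4 → K, memB s (φ.mulVec w)) := by
  constructor
  · intro h
    refine (exists_le_coneA_or_exists_le_coneB (LinearMap.range φ.mulVecLin) ?_).imp
      (fun ⟨s, hs, hle⟩ => ⟨s, hs, fun w => hle ⟨w, rfl⟩⟩)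
      (fun ⟨s, hs, hle⟩ => ⟨s, hs, fun w => hle ⟨w, rfl⟩⟩)
    rintro _ ⟨w, rfl⟩
    exact sub_eq_zero.2 (h w)
  · rintro (⟨s, hs, h⟩ | ⟨s, hs, h⟩) w
    · exact sub_eq_zero.1 (quadric_eq_zero_of_memA hs (h w))
    · exact sub_eq_zero.1 (quadric_eq_zero_of_memB hs (h w))

/-- The support of the base scheme of the rational map induced by the smooth
quadric `Q = V(x₀x₃ - x₁x₂)` is `Z₁ ∪ Z₂`. -/
theorem base_locus_eq_union [IsAlgClosed K] [CharZero K]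
    (φ : Matrix (Fin 4) (Fin 4) K) (hφ : φ ≠ 0) :
    (∀ w : Fin 4 → K, φ.mulVec w 0 * φ.mulVec w 3 = φ.mulVec w 1 * φ.mulVec w 2) ↔
      (∃ s : Fin 2 → K, s ≠ 0 ∧ ∀ w : Fin 4 → K, memA s (φ.mulVec w)) ∨
      (∃ s : Fin 2 → K, s ≠ 0 ∧ ∀ w : Fin 4 → K, memB s (φ.mulVec w)) :=
  base_locus_eq_union_general φ
end

section
/- Let φ ∈ M₄(K) be nonzero. Then there exists s ∈ K²\{0} with φw ∈ A_s for all w ∈ K⁴ if and only if there exist s ∈ K²\{0} and t ∈ M_{2×4}(K)\{0} with φ = σ₁(s,t); analogously, there exists s ∈ K²\{0} with φw ∈ B_s for all w ∈ K⁴ if and only if φ = σ₂(s,t) for some such s and t. That is, Z₁ and Z₂ are the images of the Segre embeddings σ₁ and σ₂ of ℙ¹×ℙ⁷. -/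
variable {K : Type*} [Field K]

/-- The Segre embedding `σ₁`: rows `(s₀t⁰, s₀t¹, s₁t⁰, s₁t¹)`. -/
def segre1 (s : Fin 2 → K) (t : Matrix (Fin 2) (Fin 4) K) :
    Matrix (Fin 4) (Fin 4) K :=
  Matrix.of fun i j => s (![0, 0, 1, 1] i) * t (![0, 1, 0, 1] i) j

/-- The Segre embedding `σ₂`: rows `(s₀t⁰, s₁t⁰, s₀t¹, s₁t¹)`. -/
def segre2 (s : Fin 2 → K) (t : Matrix (Fin 2) (Fin 4) K) :
    Matrix (Fin 4) (Fin 4) K :=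
  Matrix.of fun i j => s (![0, 1, 0, 1] i) * t (![0, 0, 1, 1] i) j

/-!
`φ` maps everything into `A_s` exactly when its rows satisfy `s₁ φ⁰ = s₀ φ²` and
`s₁ φ¹ = s₀ φ³`. Since `s ≠ 0`, vectors with `s₁ u = s₀ v` are of the form `u = s₀ r`,
`v = s₁ r`, and the two vectors `r` obtained this way are the rows of `t` with `φ = σ₁(s, t)`;
`t ≠ 0` because `φ ≠ 0`. The same argument with the rows paired as `(0, 1), (2, 3)` gives `B_s`.
-/

open Matrix

theorem fin_two_ne_zero_iff {s : Fin 2 → K} : s ≠ 0 ↔ s 0 ≠ 0 ∨ s 1 ≠ 0 := by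
  rw [Function.ne_iff, Fin.exists_fin_two, Pi.zero_apply, Pi.zero_apply]

theorem smul_eq_smul_iff_exists_eq_smul {M : Type*} [AddCommGroup M] [Module K M] {a b : K}
    (hab : a ≠ 0 ∨ b ≠ 0) {u v : M} : b • u = a • v ↔ ∃ r : M, u = a • r ∧ v = b • r := by
  constructor
  · intro h
    rcases hab with ha | hb
    · refine ⟨a⁻¹ • u, (smul_inv_smul₀ ha u).symm, ?_⟩
      rw [smul_comm, h, inv_smul_smul₀ ha]
    · refine ⟨b⁻¹ • v, ?_, (smul_inv_smul₀ hb v).symm⟩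
      rw [smul_comm, ← h, inv_smul_smul₀ hb]
  · rintro ⟨r, rfl, rfl⟩
    exact smul_comm b a r

theorem forall_mul_mulVec_eq_iff {m n : Type*} [Fintype n] [DecidableEq n] (φ : Matrix m n K)
    (a b : K) (i j : m) : (∀ w, a * (φ *ᵥ w) i = b * (φ *ᵥ w) j) ↔ a • φ i = b • φ j := by
  constructor
  · intro h
    ext k
    simpa [mulVec_single] using h (Pi.single k 1)
  · intro h w
    simpa only [mulVec, smul_dotProduct, smul_eq_mul] using congrArg (· ⬝ᵥ w) h

section Segre

variable {s : Fin 2 → K} {t : Matrix (Fin 2) (Fin 4) K} {φ : Matrix (Fin 4) (Fin 4) K}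

theorem segre1_zero_right (s : Fin 2 → K) : segre1 s 0 = 0 := by
  ext i j
  simp [segre1]

theorem segre2_zero_right (s : Fin 2 → K) : segre2 s 0 = 0 := by
  ext i j
  simp [segre2]

theorem eq_segre1_iff :
    φ = segre1 s t ↔ φ 0 = s 0 • t 0 ∧ φ 1 = s 0 • t 1 ∧ φ 2 = s 1 • t 0 ∧ φ 3 = s 1 • t 1 := by
  constructor
  · rintro rfl
    refine ⟨?_, ?_, ?_, ?_⟩ <;> ext j <;> simp [segre1]
  · rintro ⟨h0, h1, h2, h3⟩
    ext i j
    fin_cases i <;> simp [segre1, h0, h1, h2, h3]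

theorem eq_segre2_iff :
    φ = segre2 s t ↔ φ 0 = s 0 • t 0 ∧ φ 1 = s 1 • t 0 ∧ φ 2 = s 0 • t 1 ∧ φ 3 = s 1 • t 1 := by
  constructor
  · rintro rfl
    refine ⟨?_, ?_, ?_, ?_⟩ <;> ext j <;> simp [segre2]
  · rintro ⟨h0, h1, h2, h3⟩
    ext i j
    fin_cases i <;> simp [segre2, h0, h1, h2, h3]

theorem exists_eq_segre1_iff (hs : s ≠ 0) :
    (∃ t, φ = segre1 s t) ↔ ∀ w, memA s (φ *ᵥ w) := by
  simp only [memA, forall_and, forall_mul_mulVec_eq_iff, eq_segre1_iff,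
    smul_eq_smul_iff_exists_eq_smul (fin_two_ne_zero_iff.1 hs)]
  constructor
  · rintro ⟨t, h0, h1, h2, h3⟩
    exact ⟨⟨t 0, h0, h2⟩, ⟨t 1, h1, h3⟩⟩
  · rintro ⟨⟨r, h0, h2⟩, ⟨r', h1, h3⟩⟩
    exact ⟨![r, r'], h0, h1, h2, h3⟩

theorem exists_eq_segre2_iff (hs : s ≠ 0) :
    (∃ t, φ = segre2 s t) ↔ ∀ w, memB s (φ *ᵥ w) := by
  simp only [memB, forall_and, forall_mul_mulVec_eq_iff, eq_segre2_iff,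
    smul_eq_smul_iff_exists_eq_smul (fin_two_ne_zero_iff.1 hs)]
  constructor
  · rintro ⟨t, h0, h1, h2, h3⟩
    exact ⟨⟨t 0, h0, h1⟩, ⟨t 1, h2, h3⟩⟩
  · rintro ⟨⟨r, h0, h1⟩, ⟨r', h2, h3⟩⟩
    exact ⟨![r, r'], h0, h1, h2, h3⟩

end Segre

theorem components_eq_segre_images_general
    (φ : Matrix (Fin 4) (Fin 4) K) (hφ : φ ≠ 0) :
    ((∃ s : Fin 2 → K, s ≠ 0 ∧ ∀ w : Fin 4 → K, memA s (φ.mulVec w)) ↔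
      (∃ (s : Fin 2 → K) (t : Matrix (Fin 2) (Fin 4) K),
        s ≠ 0 ∧ t ≠ 0 ∧ φ = segre1 s t)) ∧
    ((∃ s : Fin 2 → K, s ≠ 0 ∧ ∀ w : Fin 4 → K, memB s (φ.mulVec w)) ↔
      (∃ (s : Fin 2 → K) (t : Matrix (Fin 2) (Fin 4) K),
        s ≠ 0 ∧ t ≠ 0 ∧ φ = segre2 s t)) := by
  refine ⟨⟨?_, ?_⟩, ⟨?_, ?_⟩⟩
  · rintro ⟨s, hs, h⟩
    obtain ⟨t, rfl⟩ := (exists_eq_segre1_iff hs).2 h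
    exact ⟨s, t, hs, by rintro rfl; exact hφ (segre1_zero_right s), rfl⟩
  · rintro ⟨s, t, hs, -, rfl⟩
    exact ⟨s, hs, (exists_eq_segre1_iff hs).1 ⟨t, rfl⟩⟩
  · rintro ⟨s, hs, h⟩
    obtain ⟨t, rfl⟩ := (exists_eq_segre2_iff hs).2 h
    exact ⟨s, t, hs, by rintro rfl; exact hφ (segre2_zero_right s), rfl⟩
  · rintro ⟨s, t, hs, -, rfl⟩
    exact ⟨s, hs, (exists_eq_segre2_iff hs).1 ⟨t, rfl⟩⟩

/-- `Z₁` and `Z₂` are the images of the Segre embeddings `σ₁` and `σ₂`. -/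
theorem components_eq_segre_images [IsAlgClosed K] [CharZero K]
    (φ : Matrix (Fin 4) (Fin 4) K) (hφ : φ ≠ 0) :
    ((∃ s : Fin 2 → K, s ≠ 0 ∧ ∀ w : Fin 4 → K, memA s (φ.mulVec w)) ↔
      (∃ (s : Fin 2 → K) (t : Matrix (Fin 2) (Fin 4) K),
        s ≠ 0 ∧ t ≠ 0 ∧ φ = segre1 s t)) ∧
    ((∃ s : Fin 2 → K, s ≠ 0 ∧ ∀ w : Fin 4 → K, memB s (φ.mulVec w)) ↔
      (∃ (s : Fin 2 → K) (t : Matrix (Fin 2) (Fin 4) K),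
        s ≠ 0 ∧ t ≠ 0 ∧ φ = segre2 s t)) :=
  components_eq_segre_images_general φ hφ
end

section
/- Let p, q ∈ K²\{0} and k ∈ K⁴\{0}, and let φ = ρ(σ(p,q), k) ∈ Z₁ ∩ Z₂. Then the subspace T₁ = {σ₁(p,t) + σ₁(s, ρ'(q,k)) : t ∈ M_{2×4}(K), s ∈ K²} of M₄(K) — the (affine cone over the) embedded tangent space to Z₁ at φ — has dimension 9 and equals the linear span of the union of the two sets {ψ ∈ M₄(K) : ψw ∈ A_p for all w} and {ψ ∈ M₄(K) : ψx = 0 whenever Σᵢ kᵢxᵢ = 0, and there exists r ∈ K² with ψw ∈ K·σ(r,q) for all w}. The analogous statement holds for Z₂ with the roles of the rulings exchanged. -/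
variable {K : Type*} [Field K]

/-- The Segre map `σ : ℙ¹ × ℙ¹ → ℙ³`, `σ(p,q) = (p₀q₀, p₀q₁, p₁q₀, p₁q₁)`. -/
def segreV (p q : Fin 2 → K) : Fin 4 → K :=
  ![p 0 * q 0, p 0 * q 1, p 1 * q 0, p 1 * q 1]

/-- The rank-one matrix `ρ(u,k)ᵢⱼ = uᵢkⱼ`. -/
def rho (u k : Fin 4 → K) : Matrix (Fin 4) (Fin 4) K :=
  Matrix.of fun i j => u i * k j

/-- The rank-one `2×4` matrix `ρ'(p,k)ᵢⱼ = pᵢkⱼ`. -/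
def rho' (p : Fin 2 → K) (k : Fin 4 → K) : Matrix (Fin 2) (Fin 4) K :=
  Matrix.of fun i j => p i * k j

/-!
`T₁` is the image of the linear map `(t, s) ↦ σ₁(p,t) + σ₁(s, ρ'(q,k))`, the differential at
`(p, ρ'(q,k))` of the parametrisation `(s, t) ↦ σ₁(s, t)` of `Z₁`. Its kernel is the line spanned
by `(-ρ'(q,k), p)`, so `T₁` has dimension `10 - 1 = 9`. The summands `σ₁(p,t)` are exactly the
matrices with image in `A_p`, and the summands `σ₁(s, ρ'(q,k)) = ρ(σ(s,q), k)` are exactly the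
maps killing `k^⊥` with image in a point of the line `{σ(r,q)}`. The statement for `Z₂` is the
one for `Z₁` transported by the exchange of the two middle rows, which turns `σ₁` into `σ₂`
and `A_q` into `B_q`.
-/

open Matrix

theorem exists_eq_smul_of_mul_eq_mul {p s : Fin 2 → K} (hp : p ≠ 0)
    (h : p 0 * s 1 = p 1 * s 0) : ∃ c : K, s = c • p := by
  obtain ⟨a, ha⟩ := Function.ne_iff.mp hp
  refine ⟨s a / p a, funext fun b => ?_⟩
  rw [Pi.smul_apply, smul_eq_mul, div_mul_eq_mul_div, eq_div_iff ha]
  fin_cases a <;> fin_cases b <;> simp only [Fin.zero_eta, Fin.isValue, Fin.mk_one] <;>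
    first | linear_combination h | linear_combination -h

theorem Matrix.eq_vecMulVec_mulVec_of_dotProduct_eq_zero {m n : Type*} [Fintype n]
    [DecidableEq n] {ψ : Matrix m n K} {k w : n → K} (hw : k ⬝ᵥ w = 1)
    (h : ∀ x, k ⬝ᵥ x = 0 → ψ *ᵥ x = 0) : ψ = vecMulVec (ψ *ᵥ w) k := by
  ext i j
  have hx : k ⬝ᵥ (Pi.single j 1 - k j • w) = 0 := by
    simp [dotProduct_sub, dotProduct_smul, hw]
  have := congrFun (h _ hx) i
  rw [mulVec_sub, mulVec_smul, mulVec_single_one, Pi.sub_apply, Pi.zero_apply, sub_eq_zero] at this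
  simpa [vecMulVec_apply, mul_comm] using this

theorem segreV_apply (p q : Fin 2 → K) (i : Fin 4) :
    segreV p q i = p (![0, 0, 1, 1] i) * q (![0, 1, 0, 1] i) := by
  fin_cases i <;> rfl

theorem segre1_mulVec (s : Fin 2 → K) (t : Matrix (Fin 2) (Fin 4) K) (w : Fin 4 → K) :
    segre1 s t *ᵥ w = segreV s (t *ᵥ w) := by
  ext i
  simp [segre1, segreV_apply, mulVec, dotProduct, Finset.mul_sum, mul_assoc]

theorem segre1_rho' (s q : Fin 2 → K) (k : Fin 4 → K) :
    segre1 s (rho' q k) = vecMulVec (segreV s q) k := by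
  ext i j
  simp [segre1, segreV_apply, rho', vecMulVec_apply, mul_assoc]

theorem memA_segreV (p y : Fin 2 → K) : memA p (segreV p y) :=
  ⟨mul_left_comm _ _ _, mul_left_comm _ _ _⟩

theorem exists_segreV_of_memA {p : Fin 2 → K} {x : Fin 4 → K} (hp : p ≠ 0) (hx : memA p x) :
    ∃ y, x = segreV p y := by
  obtain ⟨c₀, hc₀⟩ := exists_eq_smul_of_mul_eq_mul (s := ![x 0, x 2]) hp (by simpa using hx.1.symm)
  obtain ⟨c₁, hc₁⟩ := exists_eq_smul_of_mul_eq_mul (s := ![x 1, x 3]) hp (by simpa using hx.2.symm)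
  refine ⟨![c₀, c₁], funext fun i => ?_⟩
  fin_cases i
  · simpa [segreV, mul_comm] using congrFun hc₀ 0
  · simpa [segreV, mul_comm] using congrFun hc₁ 0
  · simpa [segreV, mul_comm] using congrFun hc₀ 1
  · simpa [segreV, mul_comm] using congrFun hc₁ 1

def imageInA (p : Fin 2 → K) : Set (Matrix (Fin 4) (Fin 4) K) :=
  {ψ | ∀ w : Fin 4 → K, memA p (ψ *ᵥ w)}

def imageInB (q : Fin 2 → K) : Set (Matrix (Fin 4) (Fin 4) K) :=
  {ψ | ∀ w : Fin 4 → K, memB q (ψ *ᵥ w)}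

def killingOnLine (k : Fin 4 → K) (f : (Fin 2 → K) → Fin 4 → K) :
    Set (Matrix (Fin 4) (Fin 4) K) :=
  {ψ | (∀ x : Fin 4 → K, ∑ i, k i * x i = 0 → ψ *ᵥ x = 0) ∧
    ∃ r : Fin 2 → K, ∀ w : Fin 4 → K, ∃ c : K, ψ *ᵥ w = c • f r}

def tangentMap1 (p q : Fin 2 → K) (k : Fin 4 → K) :
    (Matrix (Fin 2) (Fin 4) K × (Fin 2 → K)) →ₗ[K] Matrix (Fin 4) (Fin 4) K where
  toFun ts := segre1 p ts.1 + segre1 ts.2 (rho' q k)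
  map_add' _ _ := by
    ext i j
    simp only [segre1, rho', of_apply, Matrix.add_apply, Prod.fst_add, Prod.snd_add,
      Pi.add_apply]
    ring
  map_smul' _ _ := by
    ext i j
    simp only [segre1, rho', of_apply, Matrix.add_apply, Matrix.smul_apply, Prod.smul_fst,
      Prod.smul_snd, Pi.smul_apply, smul_eq_mul, RingHom.id_apply]
    ring

section tangentMap1

variable {p q : Fin 2 → K} {k : Fin 4 → K}

theorem tangentMap1_apply (t : Matrix (Fin 2) (Fin 4) K) (s : Fin 2 → K) :
    tangentMap1 p q k (t, s) = segre1 p t + segre1 s (rho' q k) := rfl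

theorem coe_range_tangentMap1 :
    (LinearMap.range (tangentMap1 p q k) : Set (Matrix (Fin 4) (Fin 4) K)) =
      {χ | ∃ (t : Matrix (Fin 2) (Fin 4) K) (s : Fin 2 → K),
        χ = segre1 p t + segre1 s (rho' q k)} := by
  ext χ
  simp only [SetLike.mem_coe, LinearMap.mem_range, Prod.exists, tangentMap1_apply, eq_comm,
    Set.mem_ofPred_eq]

theorem ker_tangentMap1 (hp : p ≠ 0) (hq : q ≠ 0) (hk : k ≠ 0) :
    LinearMap.ker (tangentMap1 p q k) = K ∙ (-rho' q k, p) := by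
  ext ⟨t, s⟩
  simp only [LinearMap.mem_ker, Submodule.mem_span_singleton]
  constructor
  · intro h
    have H : ∀ a b j, p a * t b j + s a * (q b * k j) = 0 := by
      intro a b j
      -- row `2a + b` of `σ₁(s, t)` is `s a • t b`
      have := congrFun (congrFun h (![![0, 1], ![2, 3]] a b)) j
      fin_cases a <;> fin_cases b <;> simpa [tangentMap1_apply, segre1, rho'] using this
    obtain ⟨b, hb⟩ : ∃ b, q b ≠ 0 := Function.ne_iff.mp hq
    obtain ⟨j, hj⟩ : ∃ j, k j ≠ 0 := Function.ne_iff.mp hk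
    obtain ⟨c, rfl⟩ : ∃ c : K, s = c • p := exists_eq_smul_of_mul_eq_mul hp <|
      mul_right_cancel₀ (mul_ne_zero hb hj) <| by
        linear_combination p 0 * H 1 b j - p 1 * H 0 b j
    obtain ⟨a, ha⟩ : ∃ a, p a ≠ 0 := Function.ne_iff.mp hp
    refine ⟨c, Prod.ext ?_ rfl⟩
    ext b j
    apply mul_left_cancel₀ ha
    simp only [Prod.smul_fst, rho', Matrix.smul_apply, Matrix.neg_apply, of_apply, Pi.smul_apply,
      smul_eq_mul] at H ⊢
    linear_combination -H a b j
  · rintro ⟨c, h⟩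
    rw [← h, map_smul, smul_eq_zero]
    right
    ext i j
    fin_cases i <;> simp [tangentMap1_apply, segre1, rho']

theorem finrank_range_tangentMap1 (hp : p ≠ 0) (hq : q ≠ 0) (hk : k ≠ 0) :
    Module.finrank K (LinearMap.range (tangentMap1 p q k)) = 9 := by
  have := LinearMap.finrank_range_add_finrank_ker (tangentMap1 p q k)
  rw [ker_tangentMap1 hp hq hk, finrank_span_singleton fun h ↦ hp (congrArg Prod.snd h)] at this
  simp only [Module.finrank_prod, Module.finrank_matrix, Module.finrank_fin_fun, Fintype.card_fin,
    Module.finrank_self] at this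
  omega

theorem imageInA_subset_range (hp : p ≠ 0) :
    imageInA p ⊆ LinearMap.range (tangentMap1 p q k) := by
  intro ψ hψ
  choose y hy using fun j ↦ exists_segreV_of_memA hp (hψ (Pi.single j 1))
  refine ⟨(of fun b j ↦ y j b, 0), ?_⟩
  ext i j
  have := congrFun (hy j) i
  rw [mulVec_single_one] at this
  simpa [tangentMap1_apply, segre1, segreV_apply] using this.symm

theorem killingOnLine_subset_range (hk : k ≠ 0) :
    killingOnLine k (segreV · q) ⊆ LinearMap.range (tangentMap1 p q k) := by
  rintro ψ ⟨hkill, r, hr⟩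
  obtain ⟨j, hj⟩ : ∃ j, k j ≠ 0 := Function.ne_iff.mp hk
  have hw : k ⬝ᵥ Pi.single j (k j)⁻¹ = 1 := by simp [hj]
  obtain ⟨c, hc⟩ := hr (Pi.single j (k j)⁻¹)
  refine ⟨(0, c • r), ?_⟩
  rw [eq_vecMulVec_mulVec_of_dotProduct_eq_zero hw hkill, hc]
  ext i l
  simp only [tangentMap1_apply, Matrix.add_apply, vecMulVec_apply, segre1, rho', of_apply,
    Matrix.zero_apply, mul_zero, zero_add, Pi.smul_apply, smul_eq_mul, segreV_apply]
  ring

theorem range_tangentMap1_subset_span :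
    (LinearMap.range (tangentMap1 p q k) : Set (Matrix (Fin 4) (Fin 4) K)) ⊆
      Submodule.span K (imageInA p ∪ killingOnLine k (segreV · q)) := by
  rintro _ ⟨⟨t, s⟩, rfl⟩
  refine Submodule.add_mem _ (Submodule.subset_span (Or.inl fun w ↦ ?_))
    (Submodule.subset_span (Or.inr ⟨fun x hx ↦ ?_, s, fun w ↦ ⟨k ⬝ᵥ w, ?_⟩⟩))
  · rw [segre1_mulVec]
    exact memA_segreV p _
  · rw [segre1_rho', vecMulVec_mulVec, show k ⬝ᵥ x = 0 from hx]
    simp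
  · rw [segre1_rho', vecMulVec_mulVec]
    simp

theorem range_tangentMap1_eq_span (hp : p ≠ 0) (hk : k ≠ 0) :
    LinearMap.range (tangentMap1 p q k) =
      Submodule.span K (imageInA p ∪ killingOnLine k (segreV · q)) :=
  le_antisymm range_tangentMap1_subset_span <| Submodule.span_le.mpr <|
    Set.union_subset (imageInA_subset_range hp) (killingOnLine_subset_range hk)

end tangentMap1

variable (K) in
def swapMiddleRows : Matrix (Fin 4) (Fin 4) K ≃ₗ[K] Matrix (Fin 4) (Fin 4) K :=
  reindexLinearEquiv K K (Equiv.swap 1 2) (Equiv.refl (Fin 4))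

theorem swapMiddleRows_symm : (swapMiddleRows K).symm = swapMiddleRows K := by
  simp [swapMiddleRows, Equiv.symm_swap]

theorem swapMiddleRows_mulVec (ψ : Matrix (Fin 4) (Fin 4) K) (w : Fin 4 → K) :
    swapMiddleRows K ψ *ᵥ w = (ψ *ᵥ w) ∘ Equiv.swap 1 2 :=
  rfl

theorem swapMiddleRows_segre1 (s : Fin 2 → K) (t : Matrix (Fin 2) (Fin 4) K) :
    swapMiddleRows K (segre1 s t) = segre2 s t := by
  ext i j
  fin_cases i <;> rfl

theorem segreV_comp_swap (r p : Fin 2 → K) :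
    segreV r p ∘ Equiv.swap 1 2 = segreV p r := by
  ext i
  fin_cases i <;> simp [segreV, Equiv.swap_apply_of_ne_of_ne, mul_comm]

theorem image_swapMiddleRows_imageInA (q : Fin 2 → K) :
    swapMiddleRows K '' imageInA q = imageInB q := by
  rw [LinearEquiv.image_eq_preimage_symm, swapMiddleRows_symm]
  ext ψ
  simp [imageInA, imageInB, swapMiddleRows_mulVec, memA, memB, Equiv.swap_apply_of_ne_of_ne]

theorem image_swapMiddleRows_killingOnLine (k : Fin 4 → K) (p : Fin 2 → K) :
    swapMiddleRows K '' killingOnLine k (segreV · p) = killingOnLine k (segreV p ·) := by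
  rw [LinearEquiv.image_eq_preimage_symm, swapMiddleRows_symm]
  ext ψ
  simp only [killingOnLine, Set.mem_preimage, Set.mem_ofPred_eq, swapMiddleRows_mulVec,
    ← Equiv.eq_comp_symm, Equiv.symm_swap, Pi.zero_comp, Pi.smul_comp, segreV_comp_swap]

def tangentMap2 (p q : Fin 2 → K) (k : Fin 4 → K) :
    (Matrix (Fin 2) (Fin 4) K × (Fin 2 → K)) →ₗ[K] Matrix (Fin 4) (Fin 4) K :=
  (swapMiddleRows K).toLinearMap ∘ₗ tangentMap1 q p k

section tangentMap2

variable {p q : Fin 2 → K} {k : Fin 4 → K}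

theorem coe_range_tangentMap2 :
    (LinearMap.range (tangentMap2 p q k) : Set (Matrix (Fin 4) (Fin 4) K)) =
      {χ | ∃ (t : Matrix (Fin 2) (Fin 4) K) (s : Fin 2 → K),
        χ = segre2 q t + segre2 s (rho' p k)} := by
  ext χ
  simp only [tangentMap2, SetLike.mem_coe, LinearMap.mem_range, Prod.exists,
    LinearMap.coe_comp, LinearEquiv.coe_coe, Function.comp_apply, tangentMap1_apply, map_add,
    swapMiddleRows_segre1, eq_comm, Set.mem_ofPred_eq]

theorem finrank_range_tangentMap2 (hp : p ≠ 0) (hq : q ≠ 0) (hk : k ≠ 0) :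
    Module.finrank K (LinearMap.range (tangentMap2 p q k)) = 9 := by
  rw [tangentMap2, LinearMap.range_comp, LinearEquiv.finrank_map_eq]
  exact finrank_range_tangentMap1 hq hp hk

theorem range_tangentMap2_eq_span (hq : q ≠ 0) (hk : k ≠ 0) :
    LinearMap.range (tangentMap2 p q k) =
      Submodule.span K (imageInB q ∪ killingOnLine k (segreV p ·)) := by
  rw [tangentMap2, LinearMap.range_comp, range_tangentMap1_eq_span hq hk, Submodule.map_span,
    LinearEquiv.coe_coe, Set.image_union, image_swapMiddleRows_imageInA,
    image_swapMiddleRows_killingOnLine]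

end tangentMap2

theorem tangent_space_Z_general
    (p q : Fin 2 → K) (k : Fin 4 → K) (hp : p ≠ 0) (hq : q ≠ 0) (hk : k ≠ 0) :
    (Module.finrank K ↥(Submodule.span K
        {χ : Matrix (Fin 4) (Fin 4) K |
          ∃ (t : Matrix (Fin 2) (Fin 4) K) (s : Fin 2 → K),
            χ = segre1 p t + segre1 s (rho' q k)}) = 9 ∧
      {χ : Matrix (Fin 4) (Fin 4) K |
          ∃ (t : Matrix (Fin 2) (Fin 4) K) (s : Fin 2 → K),
            χ = segre1 p t + segre1 s (rho' q k)}
        = ↑(Submodule.span K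
            ({ψ : Matrix (Fin 4) (Fin 4) K | ∀ w : Fin 4 → K, memA p (ψ.mulVec w)} ∪
             {ψ : Matrix (Fin 4) (Fin 4) K |
               (∀ x : Fin 4 → K, ∑ i, k i * x i = 0 → ψ.mulVec x = 0) ∧
               ∃ r : Fin 2 → K, ∀ w : Fin 4 → K, ∃ c : K,
                 ψ.mulVec w = c • segreV r q}))) ∧
    (Module.finrank K ↥(Submodule.span K
        {χ : Matrix (Fin 4) (Fin 4) K |
          ∃ (t : Matrix (Fin 2) (Fin 4) K) (s : Fin 2 → K),
            χ = segre2 q t + segre2 s (rho' p k)}) = 9 ∧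
      {χ : Matrix (Fin 4) (Fin 4) K |
          ∃ (t : Matrix (Fin 2) (Fin 4) K) (s : Fin 2 → K),
            χ = segre2 q t + segre2 s (rho' p k)}
        = ↑(Submodule.span K
            ({ψ : Matrix (Fin 4) (Fin 4) K | ∀ w : Fin 4 → K, memB q (ψ.mulVec w)} ∪
             {ψ : Matrix (Fin 4) (Fin 4) K |
               (∀ x : Fin 4 → K, ∑ i, k i * x i = 0 → ψ.mulVec x = 0) ∧
               ∃ r : Fin 2 → K, ∀ w : Fin 4 → K, ∃ c : K,
                 ψ.mulVec w = c • segreV p r}))) := by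
  rw [← coe_range_tangentMap1, ← coe_range_tangentMap2, Submodule.span_eq, Submodule.span_eq]
  exact ⟨⟨finrank_range_tangentMap1 hp hq hk, congrArg _ (range_tangentMap1_eq_span hp hk)⟩,
    finrank_range_tangentMap2 hp hq hk, congrArg _ (range_tangentMap2_eq_span hq hk)⟩

/-- The embedded tangent space to `Z₁` (resp. `Z₂`) at `φ = ρ(σ(p,q),k)` has
dimension 9 and is spanned by the matrices with image in the a-line cone `A_p`
(resp. `B_q`) together with the matrices killing the hyperplane `k^∨` whose image
is a point of the other ruling line. -/
theorem tangent_space_Z [IsAlgClosed K] [CharZero K]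
    (p q : Fin 2 → K) (k : Fin 4 → K) (hp : p ≠ 0) (hq : q ≠ 0) (hk : k ≠ 0) :
    (Module.finrank K ↥(Submodule.span K
        {χ : Matrix (Fin 4) (Fin 4) K |
          ∃ (t : Matrix (Fin 2) (Fin 4) K) (s : Fin 2 → K),
            χ = segre1 p t + segre1 s (rho' q k)}) = 9 ∧
      {χ : Matrix (Fin 4) (Fin 4) K |
          ∃ (t : Matrix (Fin 2) (Fin 4) K) (s : Fin 2 → K),
            χ = segre1 p t + segre1 s (rho' q k)}
        = ↑(Submodule.span K
            ({ψ : Matrix (Fin 4) (Fin 4) K | ∀ w : Fin 4 → K, memA p (ψ.mulVec w)} ∪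
             {ψ : Matrix (Fin 4) (Fin 4) K |
               (∀ x : Fin 4 → K, ∑ i, k i * x i = 0 → ψ.mulVec x = 0) ∧
               ∃ r : Fin 2 → K, ∀ w : Fin 4 → K, ∃ c : K,
                 ψ.mulVec w = c • segreV r q}))) ∧
    (Module.finrank K ↥(Submodule.span K
        {χ : Matrix (Fin 4) (Fin 4) K |
          ∃ (t : Matrix (Fin 2) (Fin 4) K) (s : Fin 2 → K),
            χ = segre2 q t + segre2 s (rho' p k)}) = 9 ∧
      {χ : Matrix (Fin 4) (Fin 4) K |
          ∃ (t : Matrix (Fin 2) (Fin 4) K) (s : Fin 2 → K),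
            χ = segre2 q t + segre2 s (rho' p k)}
        = ↑(Submodule.span K
            ({ψ : Matrix (Fin 4) (Fin 4) K | ∀ w : Fin 4 → K, memB q (ψ.mulVec w)} ∪
             {ψ : Matrix (Fin 4) (Fin 4) K |
               (∀ x : Fin 4 → K, ∑ i, k i * x i = 0 → ψ.mulVec x = 0) ∧
               ∃ r : Fin 2 → K, ∀ w : Fin 4 → K, ∃ c : K,
                 ψ.mulVec w = c • segreV p r}))) :=
  tangent_space_Z_general p q k hp hq hk
end

section
/- Let p, q ∈ K²\{0} and k ∈ K⁴\{0}, and set φ = ρ(σ(p,q), k). The subspace T_C = {ρ(u,k) + ρ(σ(p,q), k') : u ∈ A_p + B_q, k' ∈ K⁴} of M₄(K) — the (affine cone over the) tangent space to Z₁ ∩ Z₂ ≅ Q × ℙ³ at φ — equals {ψ ∈ M₄(K) : ψw ∈ A_p + B_q for all w ∈ K⁴, and ψx ∈ K·σ(p,q) whenever Σᵢ kᵢxᵢ = 0}. -/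
variable {K : Type*} [Field K]

/-!
Everything here is linear algebra: `A_p + B_q` is a subspace `V` containing `s = σ(p,q)`.
Given `ψ` with `im ψ ⊆ V` and `ψ (ker k) ⊆ K s`, pick `w₀` with `k ⬝ᵥ w₀ = 1` and put
`u = ψ w₀ ∈ V`. Since `x - (k ⬝ᵥ x) • w₀ ∈ ker k`, the matrix `ψ - u kᵀ` maps every vector into
`K s`, so it is `s k'ᵀ` for some `k'`.
-/

open Matrix

section RankOne

variable {m n : Type*} [Fintype n]

theorem Matrix.exists_dotProduct_eq_one {k : n → K} (hk : k ≠ 0) : ∃ w : n → K, k ⬝ᵥ w = 1 := by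
  classical
  obtain ⟨j, hj⟩ := Function.ne_iff.mp hk
  exact ⟨Pi.single j (k j)⁻¹, by simp [dotProduct_single, mul_inv_cancel₀ hj]⟩

theorem Matrix.exists_eq_vecMulVec_of_mulVec_mem_span_singleton {M : Matrix m n K} {s : m → K}
    (hM : ∀ x, M *ᵥ x ∈ K ∙ s) : ∃ k' : n → K, M = vecMulVec s k' := by
  classical
  choose c hc using fun j => Submodule.mem_span_singleton.mp (hM (Pi.single j 1))
  refine ⟨c, ext fun i j => ?_⟩
  simpa [mulVec_single_one, vecMulVec_apply, mul_comm] using (congrFun (hc j) i).symm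

theorem Matrix.setOf_vecMulVec_add_vecMulVec_eq {V : Submodule K (m → K)} {s : m → K} {k : n → K}
    (hs : s ∈ V) (hk : k ≠ 0) :
    {χ | ∃ u k', u ∈ V ∧ χ = vecMulVec u k + vecMulVec s k'} =
      {ψ : Matrix m n K | (∀ w, ψ *ᵥ w ∈ V) ∧ ∀ x, k ⬝ᵥ x = 0 → ψ *ᵥ x ∈ K ∙ s} := by
  ext χ
  constructor
  · rintro ⟨u, k', hu, rfl⟩
    have hχ (x) : (vecMulVec u k + vecMulVec s k') *ᵥ x = (k ⬝ᵥ x) • u + (k' ⬝ᵥ x) • s := by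
      simp [add_mulVec, vecMulVec_mulVec]
    refine ⟨fun w => ?_, fun x hx => ?_⟩
    · rw [hχ]
      exact V.add_mem (V.smul_mem _ hu) (V.smul_mem _ hs)
    · rw [hχ, hx, zero_smul, zero_add]
      exact Submodule.smul_mem _ _ (Submodule.mem_span_singleton_self s)
  · rintro ⟨himage, hker⟩
    obtain ⟨w₀, hw₀⟩ := exists_dotProduct_eq_one hk
    obtain ⟨k', hk'⟩ : ∃ k', χ - vecMulVec (χ *ᵥ w₀) k = vecMulVec s k' := by
      refine exists_eq_vecMulVec_of_mulVec_mem_span_singleton fun x => ?_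
      have hx : k ⬝ᵥ (x - (k ⬝ᵥ x) • w₀) = 0 := by
        rw [dotProduct_sub, dotProduct_smul, hw₀, smul_eq_mul, mul_one, sub_self]
      convert hker _ hx using 1
      simp [sub_mulVec, vecMulVec_mulVec, mulVec_sub, mulVec_smul]
    exact ⟨χ *ᵥ w₀, k', himage w₀, by rw [← hk', add_sub_cancel]⟩

end RankOne

def subspaceA (s : Fin 2 → K) : Submodule K (Fin 4 → K) where
  carrier := {x | memA s x}
  add_mem' := fun ⟨h₁, h₂⟩ ⟨h₃, h₄⟩ => ⟨by simp [mul_add, h₁, h₃], by simp [mul_add, h₂, h₄]⟩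
  zero_mem' := by simp [memA]
  smul_mem' c _ := fun ⟨h₁, h₂⟩ => ⟨by simp [mul_left_comm, h₁], by simp [mul_left_comm, h₂]⟩

def subspaceB (s : Fin 2 → K) : Submodule K (Fin 4 → K) where
  carrier := {x | memB s x}
  add_mem' := fun ⟨h₁, h₂⟩ ⟨h₃, h₄⟩ => ⟨by simp [mul_add, h₁, h₃], by simp [mul_add, h₂, h₄]⟩
  zero_mem' := by simp [memB]
  smul_mem' c _ := fun ⟨h₁, h₂⟩ => ⟨by simp [mul_left_comm, h₁], by simp [mul_left_comm, h₂]⟩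

theorem mem_subspaceA_sup_subspaceB {p q : Fin 2 → K} {u : Fin 4 → K} :
    u ∈ subspaceA p ⊔ subspaceB q ↔ ∃ a b, memA p a ∧ memB q b ∧ u = a + b := by
  simp only [Submodule.mem_sup, exists_and_left, eq_comm (a := u)]
  rfl

theorem segreV_mem_subspaceA (p q : Fin 2 → K) : segreV p q ∈ subspaceA p :=
  ⟨by simp [segreV]; ring, by simp [segreV]; ring⟩

theorem rho_eq_vecMulVec (u k : Fin 4 → K) : rho u k = vecMulVec u k := rfl

theorem tangent_space_intersection_general
    (p q : Fin 2 → K) (k : Fin 4 → K) (hk : k ≠ 0) :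
    {χ : Matrix (Fin 4) (Fin 4) K |
        ∃ (u : Fin 4 → K) (k' : Fin 4 → K),
          (∃ a b : Fin 4 → K, memA p a ∧ memB q b ∧ u = a + b) ∧
          χ = rho u k + rho (segreV p q) k'}
      = {ψ : Matrix (Fin 4) (Fin 4) K |
          (∀ w : Fin 4 → K, ∃ a b : Fin 4 → K,
            memA p a ∧ memB q b ∧ ψ.mulVec w = a + b) ∧
          (∀ x : Fin 4 → K, ∑ i, k i * x i = 0 →
            ∃ c : K, ψ.mulVec x = c • segreV p q)} := by
  have h := setOf_vecMulVec_add_vecMulVec_eq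
    (Submodule.mem_sup_left (segreV_mem_subspaceA p q) : _ ∈ subspaceA p ⊔ subspaceB q) hk
  simp only [mem_subspaceA_sup_subspaceB, Submodule.mem_span_singleton, eq_comm (b := _ *ᵥ _),
    dotProduct] at h
  simpa only [rho_eq_vecMulVec] using h

/-- The tangent space to `Z₁ ∩ Z₂ ≅ Q × ℙ³` at `φ = ρ(σ(p,q),k)` is the set of
matrices with image in the plane cone `A_p + B_q` sending the hyperplane `k^∨`
into the line `K·σ(p,q)`. -/
theorem tangent_space_intersection [IsAlgClosed K] [CharZero K]
    (p q : Fin 2 → K) (k : Fin 4 → K) (hp : p ≠ 0) (hq : q ≠ 0) (hk : k ≠ 0) :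
    {χ : Matrix (Fin 4) (Fin 4) K |
        ∃ (u : Fin 4 → K) (k' : Fin 4 → K),
          (∃ a b : Fin 4 → K, memA p a ∧ memB q b ∧ u = a + b) ∧
          χ = rho u k + rho (segreV p q) k'}
      = {ψ : Matrix (Fin 4) (Fin 4) K |
          (∀ w : Fin 4 → K, ∃ a b : Fin 4 → K,
            memA p a ∧ memB q b ∧ ψ.mulVec w = a + b) ∧
          (∀ x : Fin 4 → K, ∑ i, k i * x i = 0 →
            ∃ c : K, ψ.mulVec x = c • segreV p q)} :=
  tangent_space_intersection_general p q k hk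
end
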